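/- Let P*_{W₁|XY} and P*_{W₂|XY} be any two optimal test channels achieving R(r1*,r2*|P_XY), with induced output distributions P_{W₁*}, P_{W₂*} and conditional distributions P_{X|Wᵢ*}, P_{Y|Wᵢ*}. Then for every (x,y) in the support of P_XY, Λ(x,y|P_{W₁*},P_{X|W₁*},P_{Y|W₁*},λ1*,λ2*) = Λ(x,y|P_{W₂*},P_{X|W₂*},P_{Y|W₂*},λ1*,λ2*). In particular, the tilted information density ȷ_XY(x,y) := Λ(x,y|P_{W*},P_{X|W*},P_{Y|W*},λ1*,λ2*) is well-defined irrespective of the choice of optimal test channel. -/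

import Mathlib

open Finset Filter MeasureTheory

attribute [local instance] Classical.propDecidable

namespace GW

noncomputable section

/-- Shannon entropy (base 2) of a distribution on a finite alphabet,
with the convention `0 * log 0 = 0`. -/
def ent {α : Type*} [Fintype α] (p : α → ℝ) : ℝ := -∑ a, p a * Real.logb 2 (p a)

/-- `p` is a probability distribution on a finite alphabet. -/
def IsProb {α : Type*} [Fintype α] (p : α → ℝ) : Prop :=
  (∀ a, 0 ≤ p a) ∧ ∑ a, p a = 1

/-- `K` is a channel (a conditional probability distribution). -/
def IsChannel {α β : Type*} [Fintype α] [Fintype β] (K : α → β → ℝ) : Prop :=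
  ∀ a, IsProb (K a)

variable {𝒳 𝒴 𝒲 : Type*} [Fintype 𝒳] [Fintype 𝒴] [Fintype 𝒲]

/-- Output distribution `P_W` on `𝒲` induced by the source `p` on `𝒳 × 𝒴`
and the test channel `K`. -/
def outW (p : 𝒳 × 𝒴 → ℝ) (K : 𝒳 × 𝒴 → 𝒲 → ℝ) (w : 𝒲) : ℝ := ∑ a, p a * K a w

/-- Joint distribution of `(W, X, Y)`. -/
def jointW (p : 𝒳 × 𝒴 → ℝ) (K : 𝒳 × 𝒴 → 𝒲 → ℝ) : 𝒲 × 𝒳 × 𝒴 → ℝ :=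
  fun z => p z.2 * K z.2 z.1

/-- Joint distribution of `(W, X)`. -/
def margWX (p : 𝒳 × 𝒴 → ℝ) (K : 𝒳 × 𝒴 → 𝒲 → ℝ) : 𝒲 × 𝒳 → ℝ :=
  fun z => ∑ y, p (z.2, y) * K (z.2, y) z.1

/-- Joint distribution of `(W, Y)`. -/
def margWY (p : 𝒳 × 𝒴 → ℝ) (K : 𝒳 × 𝒴 → 𝒲 → ℝ) : 𝒲 × 𝒴 → ℝ :=
  fun z => ∑ x, p (x, z.2) * K (x, z.2) z.1

/-- Mutual information `I(W ∧ X,Y)` (base 2). -/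
def mutInfoW (p : 𝒳 × 𝒴 → ℝ) (K : 𝒳 × 𝒴 → 𝒲 → ℝ) : ℝ :=
  ent (outW p K) + ent p - ent (jointW p K)

/-- Conditional entropy `H(X|W)`. -/
def condEntX (p : 𝒳 × 𝒴 → ℝ) (K : 𝒳 × 𝒴 → 𝒲 → ℝ) : ℝ :=
  ent (margWX p K) - ent (outW p K)

/-- Conditional entropy `H(Y|W)`. -/
def condEntY (p : 𝒳 × 𝒴 → ℝ) (K : 𝒳 × 𝒴 → 𝒲 → ℝ) : ℝ :=
  ent (margWY p K) - ent (outW p K)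

/-- Conditional distribution `P_{X|W}` induced by `p` and `K`. -/
def condXW (p : 𝒳 × 𝒴 → ℝ) (K : 𝒳 × 𝒴 → 𝒲 → ℝ) (w : 𝒲) (x : 𝒳) : ℝ :=
  margWX p K (w, x) / outW p K w

/-- Conditional distribution `P_{Y|W}` induced by `p` and `K`. -/
def condYW (p : 𝒳 × 𝒴 → ℝ) (K : 𝒳 × 𝒴 → 𝒲 → ℝ) (w : 𝒲) (y : 𝒴) : ℝ :=
  margWY p K (w, y) / outW p K w

/-- The Gray–Wyner first-order rate function
`R(r1,r2|P) = min { I(W ∧ X,Y) : |𝒲| ≤ |𝒳||𝒴|+2, H(X|W) ≤ r1, H(Y|W) ≤ r2 }`. -/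
def Rgw (p : 𝒳 × 𝒴 → ℝ) (r1 r2 : ℝ) : ℝ :=
  sInf { ρ : ℝ | ∃ k, k ≤ Fintype.card 𝒳 * Fintype.card 𝒴 + 2 ∧
    ∃ K : 𝒳 × 𝒴 → Fin k → ℝ, IsChannel K ∧
      condEntX p K ≤ r1 ∧ condEntY p K ≤ r2 ∧ ρ = mutInfoW p K }

/-- `K` is an optimal test channel achieving `R(r1,r2|p)`. -/
def IsOptChannel (p : 𝒳 × 𝒴 → ℝ) (r1 r2 : ℝ) {k : ℕ} (K : 𝒳 × 𝒴 → Fin k → ℝ) : Prop :=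
  k ≤ Fintype.card 𝒳 * Fintype.card 𝒴 + 2 ∧ IsChannel K ∧
    condEntX p K ≤ r1 ∧ condEntY p K ≤ r2 ∧ mutInfoW p K = Rgw p r1 r2

/-- The function `Λ(x,y|Q_W̄, Q_{X̂|Ŵ}, Q_{Ŷ|Ŵ}, λ1, λ2)`;
terms with a vanishing conditional probability are taken to be `0`. -/
def Lam (r1 r2 lam1 lam2 : ℝ) (QW : 𝒲 → ℝ) (QX : 𝒲 → 𝒳 → ℝ) (QY : 𝒲 → 𝒴 → ℝ)
    (x : 𝒳) (y : 𝒴) : ℝ :=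
  - Real.logb 2 (∑ w, QW w *
      (if QX w x = 0 ∨ QY w y = 0 then 0 else
        (2 : ℝ) ^ (lam1 * (r1 + Real.logb 2 (QX w x)) + lam2 * (r2 + Real.logb 2 (QY w y)))))

/-- The function
`F(P_{W|XY},P_W̄,P_{X̂|Ŵ},P_{Ŷ|Ŵ}) = D(P_{W|XY}‖P_W̄|P_XY) + λ1 E[log 1/P_{X̂|Ŵ}(X|W) - r1] + λ2 E[log 1/P_{Ŷ|Ŵ}(Y|W) - r2]`. -/
def Ffun (p : 𝒳 × 𝒴 → ℝ) (r1 r2 lam1 lam2 : ℝ) (K : 𝒳 × 𝒴 → 𝒲 → ℝ)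
    (QW : 𝒲 → ℝ) (QX : 𝒲 → 𝒳 → ℝ) (QY : 𝒲 → 𝒴 → ℝ) : ℝ :=
  (∑ a : 𝒳 × 𝒴, ∑ w, p a * K a w * Real.logb 2 (K a w / QW w))
    + lam1 * (∑ a : 𝒳 × 𝒴, ∑ w, p a * K a w * (-Real.logb 2 (QX w a.1) - r1))
    + lam2 * (∑ a : 𝒳 × 𝒴, ∑ w, p a * K a w * (-Real.logb 2 (QY w a.2) - r2))

/-- The tilted information density for the Gray–Wyner network, built from an
(optimal) test channel `K` via its induced output and conditional distributions. -/
def tiltedInfo (p : 𝒳 × 𝒴 → ℝ) (r1 r2 lam1 lam2 : ℝ) {k : ℕ}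
    (K : 𝒳 × 𝒴 → Fin k → ℝ) (x : 𝒳) (y : 𝒴) : ℝ :=
  Lam r1 r2 lam1 lam2 (outW p K) (condXW p K) (condYW p K) x y

/-- The explicit optimizing channel of Lemma 1. -/
def Kstar (r1 r2 lam1 lam2 : ℝ) (QW : 𝒲 → ℝ) (QX : 𝒲 → 𝒳 → ℝ) (QY : 𝒲 → 𝒴 → ℝ) :
    𝒳 × 𝒴 → 𝒲 → ℝ :=
  fun a w => if QX w a.1 = 0 ∨ QY w a.2 = 0 then 0 else
    QW w * (2 : ℝ) ^ (Lam r1 r2 lam1 lam2 QW QX QY a.1 a.2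
      + lam1 * (r1 + Real.logb 2 (QX w a.1)) + lam2 * (r2 + Real.logb 2 (QY w a.2)))

/-- A Gray–Wyner code of blocklength `n` with message sets of sizes `M0`, `M1`, `M2`. -/
structure GWCode (𝒳 𝒴 : Type*) (n M0 M1 M2 : ℕ) where
  enc0 : (Fin n → 𝒳 × 𝒴) → Fin M0
  enc1 : (Fin n → 𝒳 × 𝒴) → Fin M1
  enc2 : (Fin n → 𝒳 × 𝒴) → Fin M2
  dec1 : Fin M0 × Fin M1 → Fin n → 𝒳
  dec2 : Fin M0 × Fin M2 → Fin n → 𝒴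

/-- Correct decoding of the source word `f`. -/
def GWCode.correct {𝒳 𝒴 : Type*} {n M0 M1 M2 : ℕ} (C : GWCode 𝒳 𝒴 n M0 M1 M2)
    (f : Fin n → 𝒳 × 𝒴) : Prop :=
  ∀ i, C.dec1 (C.enc0 f, C.enc1 f) i = (f i).1 ∧ C.dec2 (C.enc0 f, C.enc2 f) i = (f i).2

/-- Error probability of a code under the source distribution `P` on words. -/
def PeGW {n M0 M1 M2 : ℕ} (C : GWCode 𝒳 𝒴 n M0 M1 M2) (P : (Fin n → 𝒳 × 𝒴) → ℝ) : ℝ :=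
  ∑ f ∈ Finset.univ.filter (fun f => ¬ C.correct f), P f

/-- Correct probability of a code. -/
def PcGW {n M0 M1 M2 : ℕ} (C : GWCode 𝒳 𝒴 n M0 M1 M2) (P : (Fin n → 𝒳 × 𝒴) → ℝ) : ℝ :=
  1 - PeGW C P

/-- The i.i.d. (product) distribution on length-`n` source words. -/
def prodDist (p : 𝒳 × 𝒴 → ℝ) (n : ℕ) : (Fin n → 𝒳 × 𝒴) → ℝ := fun f => ∏ i, p (f i)

/-- First-order achievability of a rate triple for the Gray–Wyner network. -/
def GWAchievable (p : 𝒳 × 𝒴 → ℝ) (r0 r1 r2 : ℝ) : Prop :=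
  ∃ (M0 M1 M2 : ℕ → ℕ) (C : (n : ℕ) → GWCode 𝒳 𝒴 n (M0 n) (M1 n) (M2 n)),
    limsup (fun n : ℕ => Real.logb 2 (M0 n) / n) atTop ≤ r0 ∧
    limsup (fun n : ℕ => Real.logb 2 (M1 n) / n) atTop ≤ r1 ∧
    limsup (fun n : ℕ => Real.logb 2 (M2 n) / n) atTop ≤ r2 ∧
    Tendsto (fun n : ℕ => PeGW (C n) (prodDist p n)) atTop (nhds 0)

/-- Second-order `(ε, r0*, r1*, r2*)`-achievability of `(L0, L1, L2)`. -/
def GWSecondAchievable (p : 𝒳 × 𝒴 → ℝ) (ε r0 r1 r2 L0 L1 L2 : ℝ) : Prop :=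
  ∃ (M0 M1 M2 : ℕ → ℕ) (C : (n : ℕ) → GWCode 𝒳 𝒴 n (M0 n) (M1 n) (M2 n)),
    limsup (fun n : ℕ => (Real.logb 2 (M0 n) - n * r0) / Real.sqrt n) atTop ≤ L0 ∧
    limsup (fun n : ℕ => (Real.logb 2 (M1 n) - n * r1) / Real.sqrt n) atTop ≤ L1 ∧
    limsup (fun n : ℕ => (Real.logb 2 (M2 n) - n * r2) / Real.sqrt n) atTop ≤ L2 ∧
    limsup (fun n : ℕ => PeGW (C n) (prodDist p n)) atTop ≤ ε

/-- Empirical distribution (type) of a sequence. -/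
def empDist {α : Type*} [Fintype α] {n : ℕ} (f : Fin n → α) (a : α) : ℝ :=
  ((Finset.univ.filter fun i => f i = a).card : ℝ) / n

/-- `p` is a type of length-`n` sequences. -/
def IsJointType {α : Type*} [Fintype α] (n : ℕ) (p : α → ℝ) : Prop :=
  ∃ f : Fin n → α, ∀ a, p a = empDist f a

/-- `V` is a conditional type (of length `n`) given the joint type `p`. -/
def IsCondType (n : ℕ) (p : 𝒳 × 𝒴 → ℝ) (V : 𝒳 × 𝒴 → 𝒲 → ℝ) : Prop :=
  IsChannel V ∧ ∀ a, 0 < p a → ∀ w, ∃ c : ℕ, V a w = c / (n * p a)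

/-- The uniform distribution on the type class of the joint type `p`. -/
def unifType (n : ℕ) (p : 𝒳 × 𝒴 → ℝ) : (Fin n → 𝒳 × 𝒴) → ℝ :=
  fun f => if ∀ a, empDist f a = p a then
    (1 : ℝ) / ((Finset.univ.filter fun g : Fin n → 𝒳 × 𝒴 => ∀ a, empDist g a = p a).card : ℝ)
  else 0

/-- The single-letter Gray–Wyner region `ℛ*_GW(P_XY)`. -/
def RegionGW (p : 𝒳 × 𝒴 → ℝ) : Set (ℝ × ℝ × ℝ) :=
  { r | ∃ k, k ≤ Fintype.card 𝒳 * Fintype.card 𝒴 + 2 ∧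
      ∃ K : 𝒳 × 𝒴 → Fin k → ℝ, IsChannel K ∧
        mutInfoW p K ≤ r.1 ∧ condEntX p K ≤ r.2.1 ∧ condEntY p K ≤ r.2.2 }

/-- `X - W - Y` forms a Markov chain (conditional independence given `W`). -/
def MarkovXWY {k : ℕ} (p : 𝒳 × 𝒴 → ℝ) (K : 𝒳 × 𝒴 → Fin k → ℝ) : Prop :=
  ∀ w x y, jointW p K (w, (x, y)) * outW p K w = margWX p K (w, x) * margWY p K (w, y)

/-- The part of the region lying on the Pangloss plane `r0 + r1 + r2 = H(X,Y)`. -/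
def PanglossSet (p : 𝒳 × 𝒴 → ℝ) : Set (ℝ × ℝ × ℝ) :=
  { r | r ∈ RegionGW p ∧ r.1 + r.2.1 + r.2.2 = ent p }

/-- The distribution corresponding to the parameter `θ`, with respect to the
labelling `e` of the support: `P_θ(e i) = θ i` for `i < m`, and the last mass
is `1 - ∑ θ`. -/
def paramDist {α : Type*} {m : ℕ} (e : Fin (m + 1) → α) (θ : Fin m → ℝ) (a : α) : ℝ :=
  (∑ i : Fin m, if e i.castSucc = a then θ i else 0) +
    (if e (Fin.last m) = a then 1 - ∑ i, θ i else 0)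

/-- Variance of `g` under the distribution `p`. -/
def varOf {α : Type*} [Fintype α] (p : α → ℝ) (g : α → ℝ) : ℝ :=
  ∑ a, p a * (g a - ∑ b, p b * g b) ^ 2

/-- The Gaussian upper-tail probability `Q(t)`. -/
def Qfun (t : ℝ) : ℝ :=
  ∫ u in Set.Ioi t, (1 / Real.sqrt (2 * Real.pi)) * Real.exp (-(u ^ 2) / 2)

end

end GW

open GW

/-!
Write `L(K) = I(W ∧ X,Y) + λ₁ (H(X|W) - r₁*) + λ₂ (H(Y|W) - r₂*)` for a test channel `K`.
Time sharing and a Carathéodory support reduction make `R` convex, so at `(r₁*, r₂*)`, where it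
is differentiable, it lies above its tangent plane; evaluated at `(H(X|W), H(Y|W))` this gives
`R(r₁*, r₂*) ≤ L(K)` for every test channel, with equality for optimal ones.

On the other hand `L(K) = F(K, Q_K)`, where `Q_K` is the triple `(P_W, P_{X|W}, P_{Y|W})` induced
by `K`, and by Gibbs' inequality `E[Λ(Q)] ≤ F(K, Q)`, with equality when `K` is the tilted
channel `K*` of `Q`, and `F(K, Q_K) ≤ F(K, Q)`. Hence `E[Λ(Q)] ≥ R(r₁*, r₂*)` for every `Q`,
with equality when `Q` is induced by an optimal channel. For two optimal channels, apply this to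
the even mixture of their induced triples: writing `Λᵢ = -log νᵢ`, the mixture has
`Λ = -log (ν₁/2 + ν₂/2)`, and strict concavity of `log` forces `ν₁ = ν₂` on the support of `P_XY`.
-/

namespace GW

open Real Topology Module

section LogSum

variable {ι : Type*} [Fintype ι] {k c : ι → ℝ}

theorem mul_log_sum_div_sum_le (hk : ∀ i, 0 ≤ k i) (hc : ∀ i, 0 ≤ c i)
    (hkc : ∀ i, c i = 0 → k i = 0) :
    (∑ i, k i) * log ((∑ i, k i) / ∑ i, c i) ≤ ∑ i, k i * log (k i / c i) := by
  rcases (Finset.sum_nonneg fun i _ => hc i).eq_or_lt with hC | hC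
  · have hc0 : ∀ i, c i = 0 := fun i =>
      (Finset.sum_eq_zero_iff_of_nonneg fun i _ => hc i).1 hC.symm i (Finset.mem_univ i)
    simp [hkc _ (hc0 _)]
  have hw : ∑ i, c i / ∑ j, c j = 1 := by rw [← Finset.sum_div, div_self hC.ne']
  have hjensen := convexOn_mul_log.map_sum_le (t := Finset.univ) (w := fun i => c i / ∑ j, c j)
    (p := fun i => k i / c i) (fun i _ => div_nonneg (hc i) hC.le) hw
    (fun i _ => Set.mem_Ici.2 (div_nonneg (hk i) (hc i)))
  have hterm : ∀ i, c i / (∑ j, c j) * (k i / c i) = k i / ∑ j, c j := by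
    intro i
    rcases eq_or_ne (c i) 0 with h | h
    · simp [h, hkc i h]
    · field_simp
  simp only [smul_eq_mul, hterm, ← Finset.sum_div, ← mul_assoc] at hjensen
  simp only [div_mul_eq_mul_div, ← Finset.sum_div] at hjensen
  rwa [div_le_div_iff_of_pos_right hC] at hjensen

theorem mul_logb_sum_div_sum_le {b : ℝ} (hb : 1 < b) (hk : ∀ i, 0 ≤ k i) (hc : ∀ i, 0 ≤ c i)
    (hkc : ∀ i, c i = 0 → k i = 0) :
    (∑ i, k i) * logb b ((∑ i, k i) / ∑ i, c i) ≤ ∑ i, k i * logb b (k i / c i) := by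
  simp only [logb, ← mul_div_assoc, ← Finset.sum_div]
  exact div_le_div_of_nonneg_right (mul_log_sum_div_sum_le hk hc hkc) (log_pos hb).le

theorem sum_mul_logb_div_nonneg (hk : ∀ i, 0 ≤ k i) (hk1 : ∑ i, k i = 1) (hc : ∀ i, 0 ≤ c i)
    (hc1 : ∑ i, c i ≤ 1) (hkc : ∀ i, c i = 0 → k i = 0) : 0 ≤ ∑ i, k i * logb 2 (k i / c i) := by
  have := mul_logb_sum_div_sum_le one_lt_two hk hc hkc
  rw [hk1, one_mul, one_div, logb_inv] at this
  exact (neg_nonneg.2 (logb_nonpos one_lt_two (Finset.sum_nonneg fun i _ => hc i) hc1)).trans this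

theorem sum_mul_logb_div_sum_div_nonneg (hk : ∀ i, 0 ≤ k i) (hc : ∀ i, 0 ≤ c i)
    (hc1 : ∑ i, c i ≤ 1) (hkc : ∀ i, c i = 0 → k i = 0) :
    0 ≤ ∑ i, k i * logb 2 (k i / (∑ j, k j) / c i) := by
  rcases (Finset.sum_nonneg (s := Finset.univ) fun i _ => hk i).eq_or_lt with hK | hK
  · have hk0 := (Finset.sum_eq_zero_iff_of_nonneg fun i _ => hk i).1 hK.symm
    simp [hk0 _ (Finset.mem_univ _)]
  have hgibbs := sum_mul_logb_div_nonneg (k := fun i => k i / ∑ j, k j)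
    (fun i => div_nonneg (hk i) hK.le) (by rw [← Finset.sum_div, div_self hK.ne']) hc hc1
    fun i hi => by simp [hkc i hi]
  have : ∑ i, k i * logb 2 (k i / (∑ j, k j) / c i)
      = (∑ j, k j) * ∑ i, k i / (∑ j, k j) * logb 2 (k i / (∑ j, k j) / c i) := by
    rw [Finset.mul_sum]
    exact Finset.sum_congr rfl fun i _ => by field_simp
  rw [this]
  exact mul_nonneg hK.le hgibbs

end LogSum

section Caratheodory

theorem exists_fin_reindex_support {ι : Type*} [Fintype ι] (μ : ι → ℝ) :
    ∃ σ : Fin #{i | μ i ≠ 0} → ι, ∀ G : ι → ℝ, ∑ j, μ (σ j) * G (σ j) = ∑ i, μ i * G i := by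
  set s : Finset ι := {i | μ i ≠ 0}
  refine ⟨fun j => s.equivFin.symm j, fun G => ?_⟩
  rw [Equiv.sum_comp s.equivFin.symm (fun i : s => μ i * G i),
    Finset.sum_coe_sort s fun i => μ i * G i,
    Finset.sum_filter_of_ne fun i _ hi => left_ne_zero_of_mul hi]

variable {ι E : Type*} [Fintype ι] [AddCommGroup E] [Module ℝ E] [FiniteDimensional ℝ E]
  {v : ι → E} {ℓ : E →ₗ[ℝ] ℝ} {h μ : ι → ℝ}

/-- Move `μ` along a linear relation `e` among the `v i` with `i` in its support: `ℓ` forces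
`∑ e i = 0`, so some `e i < 0` and the move can be stopped when a weight hits `0`; the sign of
`e` is chosen so that `∑ μ i * h i` does not decrease. -/
theorem exists_weights_card_support_lt (hℓ : ∀ i, ℓ (v i) = 1) (hμ : ∀ i, 0 ≤ μ i)
    (hcard : finrank ℝ E < #{i | μ i ≠ 0}) :
    ∃ μ' : ι → ℝ, (∀ i, 0 ≤ μ' i) ∧ #{i | μ' i ≠ 0} < #{i | μ i ≠ 0} ∧
      ∑ i, μ' i • v i = ∑ i, μ i • v i ∧ ∑ i, μ i * h i ≤ ∑ i, μ' i * h i := by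
  set s : Finset ι := {i | μ i ≠ 0}
  have hdep : ¬ LinearIndependent ℝ fun i : s => v i := fun hli => by
    have := hli.fintype_card_le_finrank
    rw [Fintype.card_coe] at this
    omega
  obtain ⟨g, hg, i₀, hi₀⟩ := Fintype.not_linearIndependent_iff.1 hdep
  set d : ι → ℝ := fun i => if hi : i ∈ s then g ⟨i, hi⟩ else 0
  have hd_out : ∀ i ∉ s, d i = 0 := fun i hi => dif_neg hi
  have hdv : ∑ i, d i • v i = 0 := by
    rw [← Finset.sum_subset s.subset_univ fun i _ hi => by rw [hd_out i hi, zero_smul],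
      ← Finset.sum_coe_sort s, ← hg]
    exact Finset.sum_congr rfl fun i _ => by simp [d, i.2]
  have hd_sum : ∀ c : ℝ, ∑ i, (c * d i) = 0 := fun c => by
    simpa [hℓ, Finset.mul_sum, mul_comm] using congrArg (fun z => c * ℓ z) hdv
  obtain ⟨e, he_out, hev, he_h, i₁, hi₁⟩ : ∃ e : ι → ℝ, (∀ i ∉ s, e i = 0) ∧
      ∑ i, e i • v i = 0 ∧ 0 ≤ ∑ i, e i * h i ∧ ∃ i, e i < 0 := by
    obtain ⟨c, hc, hch⟩ : ∃ c : ℝ, c ≠ 0 ∧ 0 ≤ c * ∑ i, d i * h i := by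
      rcases le_total 0 (∑ i, d i * h i) with hh | hh
      · exact ⟨1, one_ne_zero, by simpa using hh⟩
      · exact ⟨-1, by norm_num, by simpa using hh⟩
    refine ⟨fun i => c * d i, fun i hi => by simp [hd_out i hi], ?_, ?_, ?_⟩
    · simp only [mul_smul, ← Finset.smul_sum, hdv, smul_zero]
    · simpa only [Finset.mul_sum, mul_assoc] using hch
    · by_contra! hpos
      have hzero := (Finset.sum_eq_zero_iff_of_nonneg fun i _ => hpos i).1 (hd_sum c)
      have hi₀s : d i₀ ≠ 0 := by simpa [d, i₀.2] using hi₀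
      exact hi₀s ((mul_eq_zero.1 (hzero i₀ (Finset.mem_univ _))).resolve_left hc)
  obtain ⟨j, hj, hjmin⟩ := Finset.exists_min_image {i | e i < 0} (fun i => μ i / -e i)
    ⟨i₁, by simpa using hi₁⟩
  simp only [Finset.mem_filter, Finset.mem_univ, true_and] at hj hjmin
  set τ := μ j / -e j
  have hτ : 0 ≤ τ := div_nonneg (hμ j) (by linarith)
  refine ⟨fun i => μ i + τ * e i, fun i => ?_, ?_, ?_, ?_⟩
  · rcases lt_or_ge (e i) 0 with hi | hi
    · have := (le_div_iff₀ (neg_pos.2 hi)).1 (hjmin i hi)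
      dsimp only
      linarith
    · exact add_nonneg (hμ i) (mul_nonneg hτ hi)
  · refine Finset.card_lt_card ⟨fun i hi => ?_, fun hsub => ?_⟩
    · simp only [s, Finset.mem_filter, Finset.mem_univ, true_and] at hi ⊢
      intro hμi
      have : e i = 0 := he_out i (by simp [s, hμi])
      simp [hμi, this] at hi
    · have hjs : j ∈ s := by
        by_contra hjs
        simp [he_out j hjs] at hj
      have := hsub hjs
      simp only [Finset.mem_filter, Finset.mem_univ, true_and, τ] at this
      exact this (by field_simp [hj.ne]; ring)
  · simp only [add_smul, mul_smul, Finset.sum_add_distrib, ← Finset.smul_sum, hev, smul_zero,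
      add_zero]
  · simp only [add_mul, Finset.sum_add_distrib, mul_assoc, ← Finset.mul_sum]
    nlinarith

theorem exists_weights_card_support_le (hℓ : ∀ i, ℓ (v i) = 1) (hμ : ∀ i, 0 ≤ μ i) :
    ∃ μ' : ι → ℝ, (∀ i, 0 ≤ μ' i) ∧ #{i | μ' i ≠ 0} ≤ finrank ℝ E ∧
      ∑ i, μ' i • v i = ∑ i, μ i • v i ∧ ∑ i, μ i * h i ≤ ∑ i, μ' i * h i := by
  induction hn : #{i | μ i ≠ 0} using Nat.strong_induction_on generalizing μ with
  | _ n ih =>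
    by_cases hle : n ≤ finrank ℝ E
    · exact ⟨μ, hμ, hn ▸ hle, rfl, le_rfl⟩
    obtain ⟨μ₁, hμ₁, hlt, hv₁, hh₁⟩ :=
      exists_weights_card_support_lt (h := h) hℓ hμ (hn ▸ not_le.1 hle)
    obtain ⟨μ₂, hμ₂, hcard, hv₂, hh₂⟩ := ih _ (hn ▸ hlt) hμ₁ rfl
    exact ⟨μ₂, hμ₂, hcard, hv₂.trans hv₁, hh₁.trans hh₂⟩

end Caratheodory

theorem _root_.HasDerivAt.tendsto_slope_const_mul {g : ℝ → ℝ} {d x₀ : ℝ} (hg : HasDerivAt g d x₀)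
    (c : ℝ) : Tendsto (fun t => t⁻¹ * (g (x₀ + c * t) - g x₀)) (𝓝[>] 0) (𝓝 (c * d)) := by
  have hline : HasDerivAt (fun t => x₀ + c * t) c 0 := by
    simpa using ((hasDerivAt_id (0 : ℝ)).const_mul c).const_add x₀
  have := (hg.comp_of_eq (0 : ℝ) hline (by simp)).tendsto_slope_zero_right
  simpa [Function.comp_def, mul_comm d c] using this

/-- Convexity bounds `f x - f y` by the mean of the one-sided difference quotients of `f` at `x`
along the axes, in the directions `-2 (y - x).1` and `-2 (y - x).2`. -/
theorem _root_.ConvexOn.tangent_plane_le {s : Set (ℝ × ℝ)} {f : ℝ × ℝ → ℝ}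
    (hf : ConvexOn ℝ s f) {x y : ℝ × ℝ} (hx : s ∈ 𝓝 x) (hy : y ∈ s) {d₁ d₂ : ℝ}
    (h₁ : HasDerivAt (fun t => f (t, x.2)) d₁ x.1) (h₂ : HasDerivAt (fun t => f (x.1, t)) d₂ x.2) :
    f x + d₁ * (y.1 - x.1) + d₂ * (y.2 - x.2) ≤ f y := by
  set u := y - x
  let A : ℝ → ℝ × ℝ := fun t => (x.1 + -2 * u.1 * t, x.2)
  let B : ℝ → ℝ × ℝ := fun t => (x.1, x.2 + -2 * u.2 * t)
  have hmem : ∀ γ : ℝ → ℝ × ℝ, Continuous γ → γ 0 = x → ∀ᶠ t in 𝓝[>] (0 : ℝ), γ t ∈ s :=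
    fun γ hγ h0 => nhdsWithin_le_nhds (hγ.tendsto' 0 x h0 hx)
  have hmid : ∀ {z w : ℝ × ℝ}, z ∈ s → w ∈ s → f ((1 / 2 : ℝ) • z + (1 / 2 : ℝ) • w) ≤
      (1 / 2 : ℝ) * f z + (1 / 2 : ℝ) * f w := fun hz hw =>
    hf.2 hz hw (by norm_num) (by norm_num) (by norm_num)
  have hbound : ∀ᶠ t in 𝓝[>] (0 : ℝ), f x - f y ≤
      (1 / 2) * (t⁻¹ * (f (A t) - f x)) + (1 / 2) * (t⁻¹ * (f (B t) - f x)) := by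
    filter_upwards [hmem (fun t => x - t • u) (by fun_prop) (by simp),
      hmem A (by fun_prop) (by simp [A]), hmem B (by fun_prop) (by simp [B]),
      Ioo_mem_nhdsGT (zero_lt_one' ℝ)] with t hM hA hB ht
    have hx_s : x ∈ s := mem_of_mem_nhds hx
    have hP := hf.2 hx_s hy (sub_nonneg.2 ht.2.le) ht.1.le (by ring)
    have hxM := hmid (hf.1 hx_s hy (sub_nonneg.2 ht.2.le) ht.1.le (by ring)) hM
    have hMAB := hmid hA hB
    have e1 : (1 / 2 : ℝ) • ((1 - t) • x + t • y) + (1 / 2 : ℝ) • (x - t • u) = x := by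
      ext <;> simp [u] <;> ring
    have e2 : (1 / 2 : ℝ) • A t + (1 / 2 : ℝ) • B t = x - t • u := by
      ext <;> simp [A, B] <;> ring
    rw [e1] at hxM
    rw [e2] at hMAB
    simp only [smul_eq_mul] at hP
    have key : t * (f x - f y) ≤ (1 / 2) * (f (A t) - f x) + (1 / 2) * (f (B t) - f x) := by
      linarith
    calc f x - f y = t⁻¹ * (t * (f x - f y)) := (inv_mul_cancel_left₀ ht.1.ne' _).symm
      _ ≤ t⁻¹ * ((1 / 2) * (f (A t) - f x) + (1 / 2) * (f (B t) - f x)) :=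
        mul_le_mul_of_nonneg_left key (inv_nonneg.2 ht.1.le)
      _ = _ := by ring
  have hlim := ((h₁.tendsto_slope_const_mul (-2 * u.1)).const_mul (1 / 2)).add
    ((h₂.tendsto_slope_const_mul (-2 * u.2)).const_mul (1 / 2))
  have := ge_of_tendsto hlim hbound
  simp only [u, Prod.fst_sub, Prod.snd_sub] at this
  linarith

theorem half_mul_logb_add_half_mul_logb_lt {x y : ℝ} (hx : 0 < x) (hy : 0 < y) (hxy : x ≠ y) :
    1 / 2 * logb 2 x + 1 / 2 * logb 2 y < logb 2 (1 / 2 * x + 1 / 2 * y) := by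
  have := strictConcaveOn_log_Ioi.2 (Set.mem_Ioi.2 hx) (Set.mem_Ioi.2 hy) hxy
    (by norm_num : (0 : ℝ) < 1 / 2) (by norm_num : (0 : ℝ) < 1 / 2) (by norm_num)
  simp only [smul_eq_mul] at this
  simp only [logb, ← mul_div_assoc, ← add_div]
  exact div_lt_div_of_pos_right this (log_pos one_lt_two)

theorem eq_of_sum_mul_neg_logb_midpoint_ge {α : Type*} [Fintype α] {p ν₁ ν₂ : α → ℝ} {c : ℝ}
    (hp : ∀ a, 0 ≤ p a) (hν₁ : ∀ a, 0 < p a → 0 < ν₁ a) (hν₂ : ∀ a, 0 < p a → 0 < ν₂ a)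
    (h₁ : ∑ a, p a * -logb 2 (ν₁ a) ≤ c) (h₂ : ∑ a, p a * -logb 2 (ν₂ a) ≤ c)
    (hmid : c ≤ ∑ a, p a * -logb 2 (1 / 2 * ν₁ a + 1 / 2 * ν₂ a)) {a : α} (ha : 0 < p a) :
    ν₁ a = ν₂ a := by
  by_contra hne
  have hle : ∀ b, p b * -logb 2 (1 / 2 * ν₁ b + 1 / 2 * ν₂ b) ≤
      1 / 2 * (p b * -logb 2 (ν₁ b)) + 1 / 2 * (p b * -logb 2 (ν₂ b)) := fun b => by
    rcases (hp b).eq_or_lt with hpb | hpb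
    · simp [← hpb]
    rcases eq_or_ne (ν₁ b) (ν₂ b) with h | h
    · rw [h, ← add_mul, add_halves, one_mul]
      linarith
    nlinarith [half_mul_logb_add_half_mul_logb_lt (hν₁ b hpb) (hν₂ b hpb) h]
  have hlt : p a * -logb 2 (1 / 2 * ν₁ a + 1 / 2 * ν₂ a) <
      1 / 2 * (p a * -logb 2 (ν₁ a)) + 1 / 2 * (p a * -logb 2 (ν₂ a)) := by
    nlinarith [half_mul_logb_add_half_mul_logb_lt (hν₁ a ha) (hν₂ a ha) hne]
  have := Finset.sum_lt_sum (fun b _ => hle b) ⟨a, Finset.mem_univ a, hlt⟩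
  rw [Finset.sum_add_distrib, ← Finset.mul_sum, ← Finset.mul_sum] at this
  linarith

section Entropy

variable {α β : Type*} [Fintype α] [Fintype β]

theorem ent_eq_sum_negMulLog (q : α → ℝ) : ent q = (∑ a, negMulLog (q a)) / log 2 := by
  simp only [ent, logb, negMulLog, Finset.sum_div]
  rw [← Finset.sum_neg_distrib]
  exact Finset.sum_congr rfl fun a _ => by ring

theorem ent_nonneg {q : α → ℝ} (hq : IsProb q) : 0 ≤ ent q := by
  rw [ent_eq_sum_negMulLog]
  refine div_nonneg (Finset.sum_nonneg fun a _ => negMulLog_nonneg (hq.1 a) ?_)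
    (log_pos one_lt_two).le
  exact hq.2 ▸ Finset.single_le_sum (fun b _ => hq.1 b) (Finset.mem_univ a)

theorem ent_mul (μ : β → ℝ) (q : β → α → ℝ) (hq : ∀ b, ∑ a, q b a = 1) :
    ent (fun z : β × α => μ z.1 * q z.1 z.2) = ent μ + ∑ b, μ b * ent (q b) := by
  simp only [ent_eq_sum_negMulLog, negMulLog_mul, Fintype.sum_prod_type, Finset.sum_add_distrib,
    ← Finset.sum_mul, ← Finset.mul_sum, hq, one_mul, add_div, Finset.sum_div, mul_div_assoc]

theorem ent_sub_ent_marginal {m : β × α → ℝ} (hm : ∀ z, 0 ≤ m z) :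
    ent m - ent (fun b => ∑ a, m (b, a))
      = -∑ b, ∑ a, m (b, a) * logb 2 (m (b, a) / ∑ a', m (b, a')) := by
  have hterm : ∀ b a, m (b, a) * logb 2 (m (b, a) / ∑ a', m (b, a'))
      = m (b, a) * logb 2 (m (b, a)) - m (b, a) * logb 2 (∑ a', m (b, a')) := by
    intro b a
    rcases (hm (b, a)).eq_or_lt with h | h
    · simp [← h]
    have hsum : 0 < ∑ a', m (b, a') :=
      h.trans_le (Finset.single_le_sum (fun a' _ => hm (b, a')) (Finset.mem_univ a))
    rw [logb_div h.ne' hsum.ne', mul_sub]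
  simp only [ent, hterm, Finset.sum_sub_distrib, ← Finset.sum_mul, Fintype.sum_prod_type]
  ring

end Entropy

section Channel

variable {𝒳 𝒴 𝒲 : Type*} [Fintype 𝒳] [Fintype 𝒴] {p : 𝒳 × 𝒴 → ℝ} {K : 𝒳 × 𝒴 → 𝒲 → ℝ}

theorem sum_margWX (w : 𝒲) : ∑ x, margWX p K (w, x) = outW p K w := by
  simp only [margWX, outW, Fintype.sum_prod_type]

theorem sum_margWY (w : 𝒲) : ∑ y, margWY p K (w, y) = outW p K w := by
  simp only [margWY, outW, Fintype.sum_prod_type]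
  exact Finset.sum_comm

theorem sum_condXW_le_one (w : 𝒲) : ∑ x, condXW p K w x ≤ 1 := by
  simp only [condXW, ← Finset.sum_div, sum_margWX]
  exact div_self_le_one _

theorem sum_condYW_le_one (w : 𝒲) : ∑ y, condYW p K w y ≤ 1 := by
  simp only [condYW, ← Finset.sum_div, sum_margWY]
  exact div_self_le_one _

variable [Fintype 𝒲]

theorem outW_nonneg (hp : IsProb p) (hK : IsChannel K) (w : 𝒲) : 0 ≤ outW p K w :=
  Finset.sum_nonneg fun a _ => mul_nonneg (hp.1 a) ((hK a).1 w)

theorem mul_le_outW (hp : IsProb p) (hK : IsChannel K) (a : 𝒳 × 𝒴) (w : 𝒲) :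
    p a * K a w ≤ outW p K w :=
  Finset.single_le_sum (fun a _ => mul_nonneg (hp.1 a) ((hK a).1 w)) (Finset.mem_univ a)

theorem sum_sum_mul_channel (hK : IsChannel K) (g : 𝒳 × 𝒴 → ℝ) :
    ∑ a, ∑ w, p a * K a w * g a = ∑ a, p a * g a :=
  Finset.sum_congr rfl fun a _ => by
    rw [← Finset.sum_mul, ← Finset.mul_sum, (hK a).2, mul_one]

theorem sum_outW (hp : IsProb p) (hK : IsChannel K) : ∑ w, outW p K w = 1 := by
  simp only [outW]
  rw [Finset.sum_comm]
  simp only [← Finset.mul_sum, (hK _).2, mul_one, hp.2]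

theorem margWX_nonneg (hp : IsProb p) (hK : IsChannel K) (z : 𝒲 × 𝒳) : 0 ≤ margWX p K z :=
  Finset.sum_nonneg fun y _ => mul_nonneg (hp.1 (z.2, y)) ((hK (z.2, y)).1 z.1)

theorem margWY_nonneg (hp : IsProb p) (hK : IsChannel K) (z : 𝒲 × 𝒴) : 0 ≤ margWY p K z :=
  Finset.sum_nonneg fun x _ => mul_nonneg (hp.1 (x, z.2)) ((hK (x, z.2)).1 z.1)

theorem mul_le_margWX (hp : IsProb p) (hK : IsChannel K) (a : 𝒳 × 𝒴) (w : 𝒲) :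
    p a * K a w ≤ margWX p K (w, a.1) :=
  Finset.single_le_sum (f := fun y => p (a.1, y) * K (a.1, y) w)
    (fun _ _ => mul_nonneg (hp.1 _) ((hK _).1 w)) (Finset.mem_univ a.2)

theorem mul_le_margWY (hp : IsProb p) (hK : IsChannel K) (a : 𝒳 × 𝒴) (w : 𝒲) :
    p a * K a w ≤ margWY p K (w, a.2) :=
  Finset.single_le_sum (f := fun x => p (x, a.2) * K (x, a.2) w)
    (fun _ _ => mul_nonneg (hp.1 _) ((hK _).1 w)) (Finset.mem_univ a.1)

theorem sum_sum_mul_eq_sum_outW (g : 𝒲 → ℝ) :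
    ∑ a, ∑ w, p a * K a w * g w = ∑ w, outW p K w * g w := by
  simp only [outW, Finset.sum_mul]
  exact Finset.sum_comm

theorem sum_sum_mul_eq_sum_margWX (g : 𝒲 → 𝒳 → ℝ) :
    ∑ a, ∑ w, p a * K a w * g w a.1 = ∑ w, ∑ x, margWX p K (w, x) * g w x := by
  simp only [margWX, Finset.sum_mul, Fintype.sum_prod_type]
  exact (Finset.sum_congr rfl fun x _ => Finset.sum_comm).trans Finset.sum_comm

theorem sum_sum_mul_eq_sum_margWY (g : 𝒲 → 𝒴 → ℝ) :
    ∑ a, ∑ w, p a * K a w * g w a.2 = ∑ w, ∑ y, margWY p K (w, y) * g w y := by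
  simp only [margWY, Finset.sum_mul, Fintype.sum_prod_type]
  exact Finset.sum_comm.trans
    ((Finset.sum_congr rfl fun y _ => Finset.sum_comm).trans Finset.sum_comm)

theorem condXW_nonneg (hp : IsProb p) (hK : IsChannel K) (w : 𝒲) (x : 𝒳) :
    0 ≤ condXW p K w x :=
  div_nonneg (margWX_nonneg hp hK _) (outW_nonneg hp hK w)

theorem condYW_nonneg (hp : IsProb p) (hK : IsChannel K) (w : 𝒲) (y : 𝒴) :
    0 ≤ condYW p K w y :=
  div_nonneg (margWY_nonneg hp hK _) (outW_nonneg hp hK w)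

theorem condEntX_eq_sum (hp : IsProb p) (hK : IsChannel K) :
    condEntX p K = ∑ a, ∑ w, p a * K a w * -logb 2 (condXW p K w a.1) := by
  have hout : outW p K = fun w => ∑ x, margWX p K (w, x) := funext fun w => (sum_margWX w).symm
  rw [sum_sum_mul_eq_sum_margWX (fun w x => -logb 2 (condXW p K w x)), condEntX, hout,
    ent_sub_ent_marginal (margWX_nonneg hp hK)]
  simp only [condXW, sum_margWX, mul_neg, Finset.sum_neg_distrib]

theorem condEntY_eq_sum (hp : IsProb p) (hK : IsChannel K) :
    condEntY p K = ∑ a, ∑ w, p a * K a w * -logb 2 (condYW p K w a.2) := by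
  have hout : outW p K = fun w => ∑ y, margWY p K (w, y) := funext fun w => (sum_margWY w).symm
  rw [sum_sum_mul_eq_sum_margWY (fun w y => -logb 2 (condYW p K w y)), condEntY, hout,
    ent_sub_ent_marginal (margWY_nonneg hp hK)]
  simp only [condYW, sum_margWY, mul_neg, Finset.sum_neg_distrib]

theorem mutInfoW_eq_sum (hp : IsProb p) (hK : IsChannel K) :
    mutInfoW p K = ∑ a, ∑ w, p a * K a w * logb 2 (K a w / outW p K w) := by
  have hjoint := ent_sub_ent_marginal (m := jointW p K) fun z => mul_nonneg (hp.1 _) ((hK _).1 _)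
  have hterm : ∀ a w, p a * K a w * logb 2 (K a w / outW p K w)
      = p a * K a w * logb 2 (p a * K a w / outW p K w) - p a * K a w * logb 2 (p a) := by
    intro a w
    rcases (mul_nonneg (hp.1 a) ((hK a).1 w)).eq_or_lt with h | h
    · simp [← h]
    have hout := h.trans_le (mul_le_outW hp hK a w)
    have hpa := pos_of_mul_pos_left h ((hK a).1 w)
    have hKa := pos_of_mul_pos_right h (hp.1 a)
    rw [logb_div hKa.ne' hout.ne', mul_div_assoc, logb_mul hpa.ne' (div_pos hKa hout).ne',
      logb_div hKa.ne' hout.ne']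
    ring
  simp only [hterm, Finset.sum_sub_distrib, sum_sum_mul_channel hK]
  rw [Finset.sum_comm]
  simp only [mutInfoW, ent, jointW, outW] at hjoint ⊢
  linarith

theorem mutInfoW_nonneg (hp : IsProb p) (hK : IsChannel K) : 0 ≤ mutInfoW p K := by
  rw [mutInfoW_eq_sum hp hK]
  refine Finset.sum_nonneg fun a _ => ?_
  rcases (hp.1 a).eq_or_lt with hpa | hpa
  · simp [← hpa]
  have hgibbs := sum_mul_logb_div_nonneg ((hK a).1) (hK a).2 (outW_nonneg hp hK)
    (sum_outW hp hK).le fun w hw => (mul_eq_zero.1 (le_antisymm (hw ▸ mul_le_outW hp hK a w)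
      (mul_nonneg (hp.1 a) ((hK a).1 w)))).resolve_left hpa.ne'
  simpa only [mul_assoc, ← Finset.mul_sum] using mul_nonneg hpa.le hgibbs

end Channel

section Decomposition

variable {𝒳 𝒴 𝒲 : Type*} [Fintype 𝒳] [Fintype 𝒴]
  {p : 𝒳 × 𝒴 → ℝ} {K : 𝒳 × 𝒴 → 𝒲 → ℝ} {μ : 𝒲 → ℝ} {q : 𝒲 → 𝒳 × 𝒴 → ℝ}

noncomputable def entX (q : 𝒳 × 𝒴 → ℝ) : ℝ := ent fun x => ∑ y, q (x, y)

noncomputable def entY (q : 𝒳 × 𝒴 → ℝ) : ℝ := ent fun y => ∑ x, q (x, y)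

theorem outW_eq_of_decomp (hq : ∀ w, ∑ a, q w a = 1) (hdec : ∀ a w, p a * K a w = μ w * q w a) :
    outW p K = μ :=
  funext fun w => by simp only [outW, hdec, ← Finset.mul_sum, hq, mul_one]

theorem entX_nonneg {q : 𝒳 × 𝒴 → ℝ} (hq : IsProb q) : 0 ≤ entX q :=
  ent_nonneg ⟨fun x => Finset.sum_nonneg fun y _ => hq.1 _,
    by rw [← Fintype.sum_prod_type]; exact hq.2⟩

theorem entY_nonneg {q : 𝒳 × 𝒴 → ℝ} (hq : IsProb q) : 0 ≤ entY q :=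
  ent_nonneg ⟨fun y => Finset.sum_nonneg fun x _ => hq.1 _,
    by rw [← Fintype.sum_prod_type_right]; exact hq.2⟩

variable [Fintype 𝒲]

theorem mutInfoW_eq_of_decomp (hq : ∀ w, ∑ a, q w a = 1)
    (hdec : ∀ a w, p a * K a w = μ w * q w a) :
    mutInfoW p K = ent p - ∑ w, μ w * ent (q w) := by
  have hjoint : jointW p K = fun z => μ z.1 * q z.1 z.2 := funext fun z => hdec z.2 z.1
  rw [mutInfoW, hjoint, ent_mul μ q hq, outW_eq_of_decomp hq hdec]
  ring

theorem condEntX_eq_of_decomp (hq : ∀ w, ∑ a, q w a = 1)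
    (hdec : ∀ a w, p a * K a w = μ w * q w a) :
    condEntX p K = ∑ w, μ w * entX (q w) := by
  have hmarg : margWX p K = fun z => μ z.1 * ∑ y, q z.1 (z.2, y) :=
    funext fun z => by simp only [margWX, hdec, ← Finset.mul_sum]
  rw [condEntX, hmarg, ent_mul μ (fun w x => ∑ y, q w (x, y))
    fun w => by rw [← Fintype.sum_prod_type, hq], outW_eq_of_decomp hq hdec]
  simp only [entX, add_sub_cancel_left]

theorem condEntY_eq_of_decomp (hq : ∀ w, ∑ a, q w a = 1)
    (hdec : ∀ a w, p a * K a w = μ w * q w a) :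
    condEntY p K = ∑ w, μ w * entY (q w) := by
  have hmarg : margWY p K = fun z => μ z.1 * ∑ x, q z.1 (x, z.2) :=
    funext fun z => by simp only [margWY, hdec, ← Finset.mul_sum]
  rw [condEntY, hmarg, ent_mul μ (fun w y => ∑ x, q w (x, y))
    fun w => by rw [← Fintype.sum_prod_type_right, hq], outW_eq_of_decomp hq hdec]
  simp only [entY, add_sub_cancel_left]

/-- Bayes' rule: `P_{XY|W}`, with the junk choice `p` where `P_W(w) = 0`. -/
theorem exists_decomp (hp : IsProb p) (hK : IsChannel K) :
    ∃ q : 𝒲 → 𝒳 × 𝒴 → ℝ, (∀ w, IsProb (q w)) ∧ ∀ a w, p a * K a w = outW p K w * q w a := by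
  refine ⟨fun w a => if outW p K w = 0 then p a else p a * K a w / outW p K w, fun w => ?_,
    fun a w => ?_⟩
  · by_cases h : outW p K w = 0
    · simpa [h] using hp
    · simp only [h, if_false]
      refine ⟨fun a => div_nonneg (mul_nonneg (hp.1 a) ((hK a).1 w)) (outW_nonneg hp hK w), ?_⟩
      rw [← Finset.sum_div]
      exact div_self h
  · by_cases h : outW p K w = 0
    · have := mul_le_outW hp hK a w
      simp only [h, if_true, zero_mul]
      exact le_antisymm (h ▸ this) (mul_nonneg (hp.1 a) ((hK a).1 w))
    · simp only [h, if_false]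
      field_simp

theorem exists_channel_of_decomp (hp : IsProb p) (hμ : ∀ w, 0 ≤ μ w) (hq : ∀ w, IsProb (q w))
    (hsum : ∀ a, ∑ w, μ w * q w a = p a) :
    ∃ K : 𝒳 × 𝒴 → 𝒲 → ℝ, IsChannel K ∧ ∀ a w, p a * K a w = μ w * q w a := by
  have hμ1 : ∑ w, μ w = 1 := by
    calc ∑ w, μ w = ∑ a, ∑ w, μ w * q w a := by
          rw [Finset.sum_comm]
          simp only [← Finset.mul_sum, (hq _).2, mul_one]
      _ = 1 := by simp only [hsum, hp.2]
  refine ⟨fun a w => if p a = 0 then μ w else μ w * q w a / p a, fun a => ?_, fun a w => ?_⟩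
  · by_cases h : p a = 0
    · simpa [h] using ⟨hμ, hμ1⟩
    · simp only [h, if_false]
      refine ⟨fun w => div_nonneg (mul_nonneg (hμ w) ((hq w).1 a)) (hp.1 a), ?_⟩
      rw [← Finset.sum_div, hsum a, div_self h]
  · by_cases h : p a = 0
    · have hle : μ w * q w a ≤ p a := hsum a ▸ Finset.single_le_sum
        (fun w _ => mul_nonneg (hμ w) ((hq w).1 a)) (Finset.mem_univ w)
      simp only [h, if_true, zero_mul]
      exact (le_antisymm (h ▸ hle) (mul_nonneg (hμ w) ((hq w).1 a))).symm
    · simp only [h, if_false]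
      field_simp

theorem condEntX_nonneg (hp : IsProb p) (hK : IsChannel K) : 0 ≤ condEntX p K := by
  obtain ⟨q, hq, hdec⟩ := exists_decomp hp hK
  rw [condEntX_eq_of_decomp (fun w => (hq w).2) hdec]
  exact Finset.sum_nonneg fun w _ => mul_nonneg (outW_nonneg hp hK w) (entX_nonneg (hq w))

theorem condEntY_nonneg (hp : IsProb p) (hK : IsChannel K) : 0 ≤ condEntY p K := by
  obtain ⟨q, hq, hdec⟩ := exists_decomp hp hK
  rw [condEntY_eq_of_decomp (fun w => (hq w).2) hdec]
  exact Finset.sum_nonneg fun w _ => mul_nonneg (outW_nonneg hp hK w) (entY_nonneg (hq w))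

/-- Carathéodory for the points `(P_{XY|W=w}, H(X|W=w), H(Y|W=w))`, whose first coordinates sum
to `1`: the weights `P_W` can be moved to a support of size at most `|𝒳||𝒴| + 2`. -/
theorem exists_fin_channel_le (hp : IsProb p) (hK : IsChannel K) :
    ∃ (k : ℕ) (K' : 𝒳 × 𝒴 → Fin k → ℝ), k ≤ Fintype.card 𝒳 * Fintype.card 𝒴 + 2 ∧
      IsChannel K' ∧ condEntX p K' = condEntX p K ∧ condEntY p K' = condEntY p K ∧
      mutInfoW p K' ≤ mutInfoW p K := by
  obtain ⟨q, hq, hdec⟩ := exists_decomp hp hK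
  let v : 𝒲 → (𝒳 × 𝒴 → ℝ) × ℝ × ℝ := fun w => (q w, entX (q w), entY (q w))
  let ℓ : ((𝒳 × 𝒴 → ℝ) × ℝ × ℝ) →ₗ[ℝ] ℝ := (∑ a, LinearMap.proj a) ∘ₗ LinearMap.fst ℝ _ _
  obtain ⟨μ, hμ, hcard, hv, hh⟩ := exists_weights_card_support_le (v := v) (ℓ := ℓ)
    (h := fun w => ent (q w)) (fun w => by simp [ℓ, v, (hq w).2]) (outW_nonneg hp hK)
  have hsum : ∀ a, ∑ w, μ w * q w a = p a := fun a => by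
    have := congrArg (fun z => z.1 a) hv
    simp only [Prod.fst_sum, Finset.sum_apply, v, Prod.smul_fst, Pi.smul_apply, smul_eq_mul,
      ← hdec] at this
    rw [this, ← Finset.mul_sum, (hK a).2, mul_one]
  have hX : ∑ w, μ w * entX (q w) = ∑ w, outW p K w * entX (q w) := by
    simpa [v, Prod.snd_sum, Prod.fst_sum] using congrArg (fun z => z.2.1) hv
  have hY : ∑ w, μ w * entY (q w) = ∑ w, outW p K w * entY (q w) := by
    simpa [v, Prod.snd_sum] using congrArg (fun z => z.2.2) hv
  obtain ⟨σ, hσ⟩ := exists_fin_reindex_support μ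
  obtain ⟨K', hK', hdec'⟩ := exists_channel_of_decomp hp (fun j => hμ (σ j)) (fun j => hq (σ j))
    fun a => (hσ fun w => q w a).trans (hsum a)
  have hq1 : ∀ j, ∑ a, q (σ j) a = 1 := fun j => (hq _).2
  have hq1' : ∀ w, ∑ a, q w a = 1 := fun w => (hq w).2
  refine ⟨_, K', ?_, hK', ?_, ?_, ?_⟩
  · have : finrank ℝ ((𝒳 × 𝒴 → ℝ) × ℝ × ℝ) = Fintype.card 𝒳 * Fintype.card 𝒴 + 2 := by
      simp [finrank_prod, finrank_fintype_fun_eq_card, Fintype.card_prod]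
    omega
  · rw [condEntX_eq_of_decomp hq1 hdec', hσ fun w => entX (q w), hX,
      condEntX_eq_of_decomp hq1' hdec]
  · rw [condEntY_eq_of_decomp hq1 hdec', hσ fun w => entY (q w), hY,
      condEntY_eq_of_decomp hq1' hdec]
  · rw [mutInfoW_eq_of_decomp hq1 hdec', hσ fun w => ent (q w), mutInfoW_eq_of_decomp hq1' hdec]
    linarith

end Decomposition

section RateFunction

variable {𝒳 𝒴 𝒲 𝒲' : Type*} {p : 𝒳 × 𝒴 → ℝ} {r1 r2 : ℝ}

noncomputable def noiselessChannel : 𝒳 × 𝒴 → 𝒳 × 𝒴 → ℝ := fun a w => if w = a then 1 else 0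

theorem mul_noiselessChannel (a w : 𝒳 × 𝒴) :
    p a * noiselessChannel a w = p w * if a = w then 1 else 0 := by
  by_cases h : a = w <;> simp [noiselessChannel, h, eq_comm]

variable [Fintype 𝒳] [Fintype 𝒴] [Fintype 𝒲] [Fintype 𝒲']

theorem Rgw_le_mutInfoW (hp : IsProb p) {K : 𝒳 × 𝒴 → 𝒲 → ℝ} (hK : IsChannel K)
    (h1 : condEntX p K ≤ r1) (h2 : condEntY p K ≤ r2) : Rgw p r1 r2 ≤ mutInfoW p K := by
  obtain ⟨k, K', hk, hK', hX, hY, hI⟩ := exists_fin_channel_le hp hK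
  refine le_trans ?_ hI
  refine csInf_le ⟨0, ?_⟩ ⟨k, hk, K', hK', hX ▸ h1, hY ▸ h2, rfl⟩
  rintro _ ⟨k, -, K, hK, -, -, rfl⟩
  exact mutInfoW_nonneg hp hK

theorem isChannel_noiselessChannel : IsChannel (noiselessChannel (𝒳 := 𝒳) (𝒴 := 𝒴)) :=
  fun a => ⟨fun w => by unfold noiselessChannel; positivity, by simp [noiselessChannel]⟩

theorem condEntX_noiselessChannel : condEntX p noiselessChannel = 0 := by
  rw [condEntX_eq_of_decomp (by simp) mul_noiselessChannel]
  simp [entX, ent, Prod.ext_iff, ite_and]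

theorem condEntY_noiselessChannel : condEntY p noiselessChannel = 0 := by
  rw [condEntY_eq_of_decomp (by simp) mul_noiselessChannel]
  simp [entY, ent, Prod.ext_iff, ite_and]

theorem exists_mutInfoW_lt_Rgw_add (hp : IsProb p) (hr1 : 0 ≤ r1) (hr2 : 0 ≤ r2) {ε : ℝ}
    (hε : 0 < ε) : ∃ (k : ℕ) (K : 𝒳 × 𝒴 → Fin k → ℝ), IsChannel K ∧ condEntX p K ≤ r1 ∧
      condEntY p K ≤ r2 ∧ mutInfoW p K < Rgw p r1 r2 + ε := by
  obtain ⟨k, K, hk, hK, hX, hY, -⟩ := exists_fin_channel_le hp isChannel_noiselessChannel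
  refine (exists_lt_of_csInf_lt ?_ (lt_add_of_pos_right (Rgw p r1 r2) hε)).elim ?_
  · exact ⟨_, k, hk, K, hK, (hX.trans condEntX_noiselessChannel).le.trans hr1,
      (hY.trans condEntY_noiselessChannel).le.trans hr2, rfl⟩
  · rintro _ ⟨⟨k, -, K, hK, hX, hY, rfl⟩, hlt⟩
    exact ⟨k, K, hK, hX, hY, hlt⟩

def timeShare (t : ℝ) (K : 𝒳 × 𝒴 → 𝒲 → ℝ) (K' : 𝒳 × 𝒴 → 𝒲' → ℝ) :
    𝒳 × 𝒴 → 𝒲 ⊕ 𝒲' → ℝ :=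
  fun a => Sum.elim (fun w => t * K a w) (fun w => (1 - t) * K' a w)

theorem isChannel_timeShare {t : ℝ} (ht0 : 0 ≤ t) (ht1 : t ≤ 1) {K : 𝒳 × 𝒴 → 𝒲 → ℝ}
    {K' : 𝒳 × 𝒴 → 𝒲' → ℝ} (hK : IsChannel K) (hK' : IsChannel K') :
    IsChannel (timeShare t K K') := fun a => by
  refine ⟨?_, ?_⟩
  · rintro (w | w)
    · exact mul_nonneg ht0 ((hK a).1 w)
    · exact mul_nonneg (sub_nonneg.2 ht1) ((hK' a).1 w)
  · simp [timeShare, Fintype.sum_sum_type, ← Finset.mul_sum, (hK a).2, (hK' a).2]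

theorem timeShare_entropies (hp : IsProb p) (t : ℝ) {K : 𝒳 × 𝒴 → 𝒲 → ℝ}
    {K' : 𝒳 × 𝒴 → 𝒲' → ℝ} (hK : IsChannel K) (hK' : IsChannel K') :
    mutInfoW p (timeShare t K K') = t * mutInfoW p K + (1 - t) * mutInfoW p K' ∧
      condEntX p (timeShare t K K') = t * condEntX p K + (1 - t) * condEntX p K' ∧
      condEntY p (timeShare t K K') = t * condEntY p K + (1 - t) * condEntY p K' := by
  obtain ⟨q, hq, hdec⟩ := exists_decomp hp hK
  obtain ⟨q', hq', hdec'⟩ := exists_decomp hp hK'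
  have hq1 : ∀ w, ∑ a, q w a = 1 := fun w => (hq w).2
  have hq1' : ∀ w, ∑ a, q' w a = 1 := fun w => (hq' w).2
  have hqM : ∀ w, ∑ a, Sum.elim q q' w a = 1 := by rintro (w | w) <;> simp [hq1, hq1']
  have hdecM : ∀ a w, p a * timeShare t K K' a w = Sum.elim (fun w => t * outW p K w)
      (fun w => (1 - t) * outW p K' w) w * Sum.elim q q' w a := by
    rintro a (w | w)
    · simp only [timeShare, Sum.elim_inl, mul_assoc, ← hdec]
      ring
    · simp only [timeShare, Sum.elim_inr, mul_assoc, ← hdec']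
      ring
  rw [mutInfoW_eq_of_decomp hqM hdecM, condEntX_eq_of_decomp hqM hdecM,
    condEntY_eq_of_decomp hqM hdecM, mutInfoW_eq_of_decomp hq1 hdec,
    mutInfoW_eq_of_decomp hq1' hdec', condEntX_eq_of_decomp hq1 hdec,
    condEntX_eq_of_decomp hq1' hdec', condEntY_eq_of_decomp hq1 hdec,
    condEntY_eq_of_decomp hq1' hdec']
  refine ⟨?_, ?_, ?_⟩ <;>
    simp only [Fintype.sum_sum_type, Sum.elim_inl, Sum.elim_inr, mul_assoc, ← Finset.mul_sum]
  ring

theorem Rgw_convexOn (hp : IsProb p) :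
    ConvexOn ℝ (Set.Ici 0 ×ˢ Set.Ici 0) fun r : ℝ × ℝ => Rgw p r.1 r.2 := by
  refine ⟨(convex_Ici 0).prod (convex_Ici 0), ?_⟩
  rintro ⟨a1, b1⟩ ⟨ha1, hb1⟩ ⟨a2, b2⟩ ⟨ha2, hb2⟩ s t hs ht hst
  obtain rfl : t = 1 - s := by linarith
  simp only [Prod.smul_mk, Prod.mk_add_mk, smul_eq_mul]
  refine le_of_forall_pos_le_add fun ε hε => ?_
  obtain ⟨k1, K1, hK1, hX1, hY1, hI1⟩ := exists_mutInfoW_lt_Rgw_add hp ha1 hb1 hε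
  obtain ⟨k2, K2, hK2, hX2, hY2, hI2⟩ := exists_mutInfoW_lt_Rgw_add hp ha2 hb2 hε
  obtain ⟨hI, hX, hY⟩ := timeShare_entropies hp s hK1 hK2
  calc Rgw p (s * a1 + (1 - s) * a2) (s * b1 + (1 - s) * b2)
      ≤ mutInfoW p (timeShare s K1 K2) := by
        refine Rgw_le_mutInfoW hp (isChannel_timeShare hs (by linarith) hK1 hK2) ?_ ?_
        · rw [hX]; gcongr
        · rw [hY]; gcongr
    _ ≤ s * Rgw p a1 b1 + (1 - s) * Rgw p a2 b2 + ε := by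
        rw [hI]
        linarith [mul_le_mul_of_nonneg_left hI1.le hs, mul_le_mul_of_nonneg_left hI2.le ht]

end RateFunction

section Lagrangian

variable {𝒳 𝒴 𝒲 : Type*} [Fintype 𝒳] [Fintype 𝒴] [Fintype 𝒲]
  {p : 𝒳 × 𝒴 → ℝ} {r1 r2 lam1 lam2 : ℝ} {K : 𝒳 × 𝒴 → 𝒲 → ℝ}
  {QW : 𝒲 → ℝ} {QX : 𝒲 → 𝒳 → ℝ} {QY : 𝒲 → 𝒴 → ℝ}

noncomputable def lagrangian (p : 𝒳 × 𝒴 → ℝ) (r1 r2 lam1 lam2 : ℝ) (K : 𝒳 × 𝒴 → 𝒲 → ℝ) :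
    ℝ :=
  mutInfoW p K + lam1 * (condEntX p K - r1) + lam2 * (condEntY p K - r2)

theorem Rgw_le_lagrangian (hp : IsProb p) (hr1 : 0 < r1) (hr2 : 0 < r2)
    (hd1 : HasDerivAt (fun r => Rgw p r r2) (-lam1) r1)
    (hd2 : HasDerivAt (fun r => Rgw p r1 r) (-lam2) r2) (hK : IsChannel K) :
    Rgw p r1 r2 ≤ lagrangian p r1 r2 lam1 lam2 K := by
  have htangent := (Rgw_convexOn hp).tangent_plane_le (x := (r1, r2))
    (y := (condEntX p K, condEntY p K))
    (prod_mem_nhds (Ici_mem_nhds hr1) (Ici_mem_nhds hr2))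
    ⟨condEntX_nonneg hp hK, condEntY_nonneg hp hK⟩ hd1 hd2
  have hR := Rgw_le_mutInfoW hp hK le_rfl le_rfl
  simp only at htangent
  rw [lagrangian]
  linarith

theorem Ffun_eq_sum : Ffun p r1 r2 lam1 lam2 K QW QX QY = ∑ a, ∑ w, p a * K a w *
    (logb 2 (K a w / QW w) - lam1 * (logb 2 (QX w a.1) + r1)
      - lam2 * (logb 2 (QY w a.2) + r2)) := by
  simp only [Ffun, Finset.mul_sum, ← Finset.sum_add_distrib]
  exact Finset.sum_congr rfl fun a _ => Finset.sum_congr rfl fun w _ => by ring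

theorem lagrangian_eq_Ffun (hp : IsProb p) (hK : IsChannel K) :
    lagrangian p r1 r2 lam1 lam2 K =
      Ffun p r1 r2 lam1 lam2 K (outW p K) (condXW p K) (condYW p K) := by
  have hsum : ∀ r : ℝ, ∑ a, ∑ w, p a * K a w * r = r := fun r => by
    rw [sum_sum_mul_channel hK fun _ => r, ← Finset.sum_mul, hp.2, one_mul]
  simp only [lagrangian, Ffun, mul_sub, Finset.sum_sub_distrib, hsum, ← mutInfoW_eq_sum hp hK,
    ← condEntX_eq_sum hp hK, ← condEntY_eq_sum hp hK]

end Lagrangian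

section GibbsVariational

variable {𝒳 𝒴 𝒲 : Type*} {p : 𝒳 × 𝒴 → ℝ} {r1 r2 lam1 lam2 : ℝ} {K : 𝒳 × 𝒴 → 𝒲 → ℝ}
  {QW : 𝒲 → ℝ} {QX : 𝒲 → 𝒳 → ℝ} {QY : 𝒲 → 𝒴 → ℝ}

noncomputable def tiltWeight (r1 r2 lam1 lam2 : ℝ) (QW : 𝒲 → ℝ) (QX : 𝒲 → 𝒳 → ℝ)
    (QY : 𝒲 → 𝒴 → ℝ) (a : 𝒳 × 𝒴) (w : 𝒲) : ℝ :=
  QW w * (if QX w a.1 = 0 ∨ QY w a.2 = 0 then 0 else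
    (2 : ℝ) ^ (lam1 * (r1 + logb 2 (QX w a.1)) + lam2 * (r2 + logb 2 (QY w a.2))))

theorem tiltWeight_nonneg (hQW : ∀ w, 0 ≤ QW w) (a : 𝒳 × 𝒴) (w : 𝒲) :
    0 ≤ tiltWeight r1 r2 lam1 lam2 QW QX QY a w := by
  unfold tiltWeight
  split_ifs
  exacts [by simp, mul_nonneg (hQW w) (rpow_nonneg zero_le_two _)]

theorem tiltWeight_of_ne_zero {a : 𝒳 × 𝒴} {w : 𝒲} (hX : QX w a.1 ≠ 0) (hY : QY w a.2 ≠ 0) :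
    tiltWeight r1 r2 lam1 lam2 QW QX QY a w =
      QW w * 2 ^ (lam1 * (r1 + logb 2 (QX w a.1)) + lam2 * (r2 + logb 2 (QY w a.2))) := by
  simp [tiltWeight, hX, hY]

/-- Absolute continuity of the law `p ⊗ K` of `(X, Y, W)` with respect to `QW ⊗ QX ⊗ QY`;
it keeps the junk value `logb 2 0 = 0` out of `Ffun`. -/
def IsAbsCont (p : 𝒳 × 𝒴 → ℝ) (K : 𝒳 × 𝒴 → 𝒲 → ℝ) (QW : 𝒲 → ℝ) (QX : 𝒲 → 𝒳 → ℝ)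
    (QY : 𝒲 → 𝒴 → ℝ) : Prop :=
  ∀ a w, p a * K a w ≠ 0 → QW w ≠ 0 ∧ QX w a.1 ≠ 0 ∧ QY w a.2 ≠ 0

theorem outW_eq_zero_of_isAbsCont [Fintype 𝒳] [Fintype 𝒴] (habs : IsAbsCont p K QW QX QY)
    {w : 𝒲} (h : QW w = 0) :
    outW p K w = 0 :=
  Finset.sum_eq_zero fun a _ => by_contra fun hne => (habs a w hne).1 h

theorem margWX_eq_zero_of_isAbsCont [Fintype 𝒴] (habs : IsAbsCont p K QW QX QY) {w : 𝒲} {x : 𝒳}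
    (h : QX w x = 0) : margWX p K (w, x) = 0 :=
  Finset.sum_eq_zero fun y _ => by_contra fun hne => (habs (x, y) w hne).2.1 h

theorem margWY_eq_zero_of_isAbsCont [Fintype 𝒳] (habs : IsAbsCont p K QW QX QY) {w : 𝒲} {y : 𝒴}
    (h : QY w y = 0) : margWY p K (w, y) = 0 :=
  Finset.sum_eq_zero fun x _ => by_contra fun hne => (habs (x, y) w hne).2.2 h

variable [Fintype 𝒲]

noncomputable def partitionFn (r1 r2 lam1 lam2 : ℝ) (QW : 𝒲 → ℝ) (QX : 𝒲 → 𝒳 → ℝ)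
    (QY : 𝒲 → 𝒴 → ℝ) (a : 𝒳 × 𝒴) : ℝ :=
  ∑ w, tiltWeight r1 r2 lam1 lam2 QW QX QY a w

theorem Lam_eq_neg_logb_partitionFn (a : 𝒳 × 𝒴) :
    Lam r1 r2 lam1 lam2 QW QX QY a.1 a.2 = -logb 2 (partitionFn r1 r2 lam1 lam2 QW QX QY a) :=
  rfl

theorem Kstar_eq_mul_tiltWeight (a : 𝒳 × 𝒴) (w : 𝒲) :
    Kstar r1 r2 lam1 lam2 QW QX QY a w =
      2 ^ Lam r1 r2 lam1 lam2 QW QX QY a.1 a.2 * tiltWeight r1 r2 lam1 lam2 QW QX QY a w := by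
  unfold Kstar tiltWeight
  split_ifs
  · simp
  · rw [add_assoc, rpow_add two_pos]
    ring

theorem sum_Kstar {a : 𝒳 × 𝒴} (hν : 0 < partitionFn r1 r2 lam1 lam2 QW QX QY a) :
    ∑ w, Kstar r1 r2 lam1 lam2 QW QX QY a w = 1 := by
  simp only [Kstar_eq_mul_tiltWeight, ← Finset.mul_sum]
  rw [← partitionFn, Lam_eq_neg_logb_partitionFn, rpow_neg zero_le_two,
    rpow_logb two_pos (by norm_num) hν, inv_mul_cancel₀ hν.ne']

/-- `Kstar`, the minimiser of `Ffun` over channels, made into a channel by using `QW` off the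
support of `p`, where the normalising constant `partitionFn` may vanish. -/
noncomputable def gibbsChannel (p : 𝒳 × 𝒴 → ℝ) (r1 r2 lam1 lam2 : ℝ) (QW : 𝒲 → ℝ)
    (QX : 𝒲 → 𝒳 → ℝ) (QY : 𝒲 → 𝒴 → ℝ) : 𝒳 × 𝒴 → 𝒲 → ℝ :=
  fun a => if p a = 0 then QW else Kstar r1 r2 lam1 lam2 QW QX QY a

theorem isAbsCont_gibbsChannel :
    IsAbsCont p (gibbsChannel p r1 r2 lam1 lam2 QW QX QY) QW QX QY := fun a w h => by
  have hpa : p a ≠ 0 := left_ne_zero_of_mul h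
  have hK := right_ne_zero_of_mul h
  simp only [gibbsChannel, hpa, if_false, Kstar] at hK
  split_ifs at hK with hXY
  · exact absurd rfl hK
  exact ⟨left_ne_zero_of_mul hK, not_or.1 hXY⟩

variable [Fintype 𝒳] [Fintype 𝒴]

theorem isAbsCont_induced (hp : IsProb p) (hK : IsChannel K) :
    IsAbsCont p K (outW p K) (condXW p K) (condYW p K) := fun a w h => by
  have hpK := (mul_nonneg (hp.1 a) ((hK a).1 w)).lt_of_ne' h
  have hout := hpK.trans_le (mul_le_outW hp hK a w)
  exact ⟨hout.ne', (div_pos (hpK.trans_le (mul_le_margWX hp hK a w)) hout).ne',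
    (div_pos (hpK.trans_le (mul_le_margWY hp hK a w)) hout).ne'⟩

theorem sum_mul_Lam_le_Ffun (hp : IsProb p) (hK : IsChannel K) (hQW : ∀ w, 0 ≤ QW w)
    (habs : IsAbsCont p K QW QX QY) :
    ∑ a, p a * Lam r1 r2 lam1 lam2 QW QX QY a.1 a.2 ≤ Ffun p r1 r2 lam1 lam2 K QW QX QY := by
  rw [Ffun_eq_sum]
  refine Finset.sum_le_sum fun a _ => ?_
  rcases (hp.1 a).eq_or_lt with hpa | hpa
  · simp [← hpa]
  have habs' : ∀ w, K a w ≠ 0 → QW w ≠ 0 ∧ QX w a.1 ≠ 0 ∧ QY w a.2 ≠ 0 :=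
    fun w hw => habs a w (mul_ne_zero hpa.ne' hw)
  have hlogsum := mul_logb_sum_div_sum_le one_lt_two (c := tiltWeight r1 r2 lam1 lam2 QW QX QY a)
    (hK a).1 (tiltWeight_nonneg hQW a)
    fun w hw => by_contra fun hKw => by
      obtain ⟨hW, hX, hY⟩ := habs' w hKw
      rw [tiltWeight_of_ne_zero hX hY] at hw
      exact mul_ne_zero hW (rpow_pos_of_pos two_pos _).ne' hw
  rw [(hK a).2, one_mul, one_div, logb_inv, ← partitionFn, ← Lam_eq_neg_logb_partitionFn] at hlogsum
  have hterm : ∀ w, K a w * logb 2 (K a w / tiltWeight r1 r2 lam1 lam2 QW QX QY a w) =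
      K a w * (logb 2 (K a w / QW w) - lam1 * (logb 2 (QX w a.1) + r1)
        - lam2 * (logb 2 (QY w a.2) + r2)) := fun w => by
    rcases eq_or_ne (K a w) 0 with hKw | hKw
    · simp [hKw]
    obtain ⟨hW, hX, hY⟩ := habs' w hKw
    rw [tiltWeight_of_ne_zero hX hY, ← div_div, logb_div (div_ne_zero hKw hW)
      (rpow_pos_of_pos two_pos _).ne', logb_rpow two_pos (by norm_num)]
    ring
  calc p a * Lam r1 r2 lam1 lam2 QW QX QY a.1 a.2
      ≤ p a * ∑ w, K a w * logb 2 (K a w / tiltWeight r1 r2 lam1 lam2 QW QX QY a w) :=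
        mul_le_mul_of_nonneg_left hlogsum hpa.le
    _ = _ := by simp only [hterm, Finset.mul_sum, mul_assoc]

theorem Ffun_induced_le (hp : IsProb p) (hK : IsChannel K) (hl1 : 0 ≤ lam1) (hl2 : 0 ≤ lam2)
    (hQW : ∀ w, 0 ≤ QW w) (hQW1 : ∑ w, QW w ≤ 1) (hQX : ∀ w x, 0 ≤ QX w x)
    (hQX1 : ∀ w, ∑ x, QX w x ≤ 1) (hQY : ∀ w y, 0 ≤ QY w y) (hQY1 : ∀ w, ∑ y, QY w y ≤ 1)
    (habs : IsAbsCont p K QW QX QY) :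
    Ffun p r1 r2 lam1 lam2 K (outW p K) (condXW p K) (condYW p K) ≤
      Ffun p r1 r2 lam1 lam2 K QW QX QY := by
  have hterm : ∀ a w, p a * K a w * (logb 2 (K a w / QW w) - lam1 * (logb 2 (QX w a.1) + r1)
        - lam2 * (logb 2 (QY w a.2) + r2))
      - p a * K a w * (logb 2 (K a w / outW p K w) - lam1 * (logb 2 (condXW p K w a.1) + r1)
        - lam2 * (logb 2 (condYW p K w a.2) + r2))
      = p a * K a w * logb 2 (outW p K w / QW w)
        + lam1 * (p a * K a w * logb 2 (condXW p K w a.1 / QX w a.1))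
        + lam2 * (p a * K a w * logb 2 (condYW p K w a.2 / QY w a.2)) := fun a w => by
    rcases eq_or_ne (p a * K a w) 0 with h | h
    · simp [h]
    obtain ⟨hW, hX, hY⟩ := habs a w h
    obtain ⟨hW', hX', hY'⟩ := isAbsCont_induced hp hK a w h
    have hKw : K a w ≠ 0 := right_ne_zero_of_mul h
    rw [logb_div hKw hW, logb_div hKw hW', logb_div hW' hW, logb_div hX' hX, logb_div hY' hY]
    ring
  have hW : 0 ≤ ∑ w, outW p K w * logb 2 (outW p K w / QW w) :=
    sum_mul_logb_div_nonneg (outW_nonneg hp hK) (sum_outW hp hK) hQW hQW1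
      fun w => outW_eq_zero_of_isAbsCont habs
  have hX : 0 ≤ ∑ w, ∑ x, margWX p K (w, x) * logb 2 (condXW p K w x / QX w x) :=
    Finset.sum_nonneg fun w _ => by
      simpa only [condXW, sum_margWX] using sum_mul_logb_div_sum_div_nonneg
        (k := fun x => margWX p K (w, x)) (fun x => margWX_nonneg hp hK _) (hQX w) (hQX1 w)
        fun x => margWX_eq_zero_of_isAbsCont habs
  have hY : 0 ≤ ∑ w, ∑ y, margWY p K (w, y) * logb 2 (condYW p K w y / QY w y) :=
    Finset.sum_nonneg fun w _ => by
      simpa only [condYW, sum_margWY] using sum_mul_logb_div_sum_div_nonneg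
        (k := fun y => margWY p K (w, y)) (fun y => margWY_nonneg hp hK _) (hQY w) (hQY1 w)
        fun y => margWY_eq_zero_of_isAbsCont habs
  rw [← sub_nonneg, Ffun_eq_sum, Ffun_eq_sum]
  simp only [← Finset.sum_sub_distrib, hterm, Finset.sum_add_distrib, ← Finset.mul_sum]
  rw [sum_sum_mul_eq_sum_outW fun w => logb 2 (outW p K w / QW w),
    sum_sum_mul_eq_sum_margWX fun w x => logb 2 (condXW p K w x / QX w x),
    sum_sum_mul_eq_sum_margWY fun w y => logb 2 (condYW p K w y / QY w y)]
  exact add_nonneg (add_nonneg hW (mul_nonneg hl1 hX)) (mul_nonneg hl2 hY)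

theorem isChannel_gibbsChannel (hQW : IsProb QW)
    (hν : ∀ a, p a ≠ 0 → 0 < partitionFn r1 r2 lam1 lam2 QW QX QY a) :
    IsChannel (gibbsChannel p r1 r2 lam1 lam2 QW QX QY) := fun a => by
  by_cases hpa : p a = 0
  · simpa [gibbsChannel, hpa] using hQW
  simp only [gibbsChannel, hpa, if_false]
  refine ⟨fun w => ?_, sum_Kstar (hν a hpa)⟩
  rw [Kstar_eq_mul_tiltWeight]
  exact mul_nonneg (rpow_nonneg zero_le_two _) (tiltWeight_nonneg hQW.1 a w)

theorem Ffun_gibbsChannel (hK : IsChannel (gibbsChannel p r1 r2 lam1 lam2 QW QX QY)) :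
    Ffun p r1 r2 lam1 lam2 (gibbsChannel p r1 r2 lam1 lam2 QW QX QY) QW QX QY =
      ∑ a, p a * Lam r1 r2 lam1 lam2 QW QX QY a.1 a.2 := by
  rw [Ffun_eq_sum, ← sum_sum_mul_channel hK]
  refine Finset.sum_congr rfl fun a _ => Finset.sum_congr rfl fun w _ => ?_
  rcases eq_or_ne (p a * gibbsChannel p r1 r2 lam1 lam2 QW QX QY a w) 0 with h | h
  · simp [h]
  obtain ⟨hW, hX, hY⟩ := isAbsCont_gibbsChannel a w h
  have hKstar : gibbsChannel p r1 r2 lam1 lam2 QW QX QY a w = QW w * 2 ^ (Lam r1 r2 lam1 lam2 QW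
      QX QY a.1 a.2 + lam1 * (r1 + logb 2 (QX w a.1)) + lam2 * (r2 + logb 2 (QY w a.2))) := by
    simp [gibbsChannel, left_ne_zero_of_mul h, Kstar, hX, hY]
  rw [hKstar, mul_div_cancel_left₀ _ hW, logb_rpow two_pos (by norm_num)]
  ring

end GibbsVariational

section TiltedInformation

variable {𝒳 𝒴 𝒲 𝒲' : Type*} [Fintype 𝒳] [Fintype 𝒴] [Fintype 𝒲] [Fintype 𝒲']
  {p : 𝒳 × 𝒴 → ℝ} {r1 r2 lam1 lam2 : ℝ}

theorem partitionFn_induced_pos (hp : IsProb p) {K : 𝒳 × 𝒴 → 𝒲 → ℝ} (hK : IsChannel K)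
    {a : 𝒳 × 𝒴} (ha : 0 < p a) :
    0 < partitionFn r1 r2 lam1 lam2 (outW p K) (condXW p K) (condYW p K) a := by
  obtain ⟨w, hw⟩ : ∃ w, K a w ≠ 0 := by
    by_contra! h
    simpa [h] using (hK a).2
  obtain ⟨hW, hX, hY⟩ := isAbsCont_induced hp hK a w (mul_ne_zero ha.ne' hw)
  refine Finset.sum_pos' (fun w _ => tiltWeight_nonneg (outW_nonneg hp hK) a w)
    ⟨w, Finset.mem_univ w, ?_⟩
  rw [tiltWeight_of_ne_zero hX hY]
  exact mul_pos ((outW_nonneg hp hK w).lt_of_ne' hW) (rpow_pos_of_pos two_pos _)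

theorem sum_mul_tiltedInfo_le_Rgw (hp : IsProb p) (hl1 : 0 ≤ lam1) (hl2 : 0 ≤ lam2) {k : ℕ}
    {K : 𝒳 × 𝒴 → Fin k → ℝ} (hK : IsOptChannel p r1 r2 K) :
    ∑ a, p a * tiltedInfo p r1 r2 lam1 lam2 K a.1 a.2 ≤ Rgw p r1 r2 := by
  obtain ⟨-, hK, hX, hY, hI⟩ := hK
  calc ∑ a, p a * tiltedInfo p r1 r2 lam1 lam2 K a.1 a.2
      ≤ Ffun p r1 r2 lam1 lam2 K (outW p K) (condXW p K) (condYW p K) :=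
        sum_mul_Lam_le_Ffun hp hK (outW_nonneg hp hK) (isAbsCont_induced hp hK)
    _ = lagrangian p r1 r2 lam1 lam2 K := (lagrangian_eq_Ffun hp hK).symm
    _ ≤ Rgw p r1 r2 := by
        rw [lagrangian, hI]
        nlinarith [mul_nonpos_of_nonneg_of_nonpos hl1 (sub_nonpos.2 hX),
          mul_nonpos_of_nonneg_of_nonpos hl2 (sub_nonpos.2 hY)]

theorem Rgw_le_sum_mul_Lam (hp : IsProb p) (hr1 : 0 < r1) (hr2 : 0 < r2)
    (hd1 : HasDerivAt (fun r => Rgw p r r2) (-lam1) r1)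
    (hd2 : HasDerivAt (fun r => Rgw p r1 r) (-lam2) r2) (hl1 : 0 ≤ lam1) (hl2 : 0 ≤ lam2)
    {QW : 𝒲 → ℝ} {QX : 𝒲 → 𝒳 → ℝ} {QY : 𝒲 → 𝒴 → ℝ} (hQW : IsProb QW)
    (hQX : ∀ w x, 0 ≤ QX w x) (hQX1 : ∀ w, ∑ x, QX w x ≤ 1) (hQY : ∀ w y, 0 ≤ QY w y)
    (hQY1 : ∀ w, ∑ y, QY w y ≤ 1) (hν : ∀ a, p a ≠ 0 → 0 < partitionFn r1 r2 lam1 lam2 QW QX QY a) :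
    Rgw p r1 r2 ≤ ∑ a, p a * Lam r1 r2 lam1 lam2 QW QX QY a.1 a.2 := by
  have hC := isChannel_gibbsChannel (p := p) (r1 := r1) (r2 := r2) (lam1 := lam1) (lam2 := lam2)
    hQW hν
  calc Rgw p r1 r2 ≤ lagrangian p r1 r2 lam1 lam2 (gibbsChannel p r1 r2 lam1 lam2 QW QX QY) :=
        Rgw_le_lagrangian hp hr1 hr2 hd1 hd2 hC
    _ = _ := lagrangian_eq_Ffun hp hC
    _ ≤ Ffun p r1 r2 lam1 lam2 (gibbsChannel p r1 r2 lam1 lam2 QW QX QY) QW QX QY :=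
        Ffun_induced_le hp hC hl1 hl2 hQW.1 hQW.2.le hQX hQX1 hQY hQY1 isAbsCont_gibbsChannel
    _ = _ := Ffun_gibbsChannel hC

theorem Rgw_le_sum_mul_neg_logb_midpoint (hp : IsProb p) (hr1 : 0 < r1) (hr2 : 0 < r2)
    (hd1 : HasDerivAt (fun r => Rgw p r r2) (-lam1) r1)
    (hd2 : HasDerivAt (fun r => Rgw p r1 r) (-lam2) r2) (hl1 : 0 ≤ lam1) (hl2 : 0 ≤ lam2)
    {K : 𝒳 × 𝒴 → 𝒲 → ℝ} {K' : 𝒳 × 𝒴 → 𝒲' → ℝ}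
    (hK : IsChannel K) (hK' : IsChannel K') :
    Rgw p r1 r2 ≤ ∑ a, p a * -logb 2
      (1 / 2 * partitionFn r1 r2 lam1 lam2 (outW p K) (condXW p K) (condYW p K) a +
        1 / 2 * partitionFn r1 r2 lam1 lam2 (outW p K') (condXW p K') (condYW p K') a) := by
  have hpart : ∀ a, partitionFn r1 r2 lam1 lam2
      (Sum.elim (fun w => 1 / 2 * outW p K w) (fun w => 1 / 2 * outW p K' w))
      (Sum.elim (condXW p K) (condXW p K')) (Sum.elim (condYW p K) (condYW p K')) a =
      1 / 2 * partitionFn r1 r2 lam1 lam2 (outW p K) (condXW p K) (condYW p K) a +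
        1 / 2 * partitionFn r1 r2 lam1 lam2 (outW p K') (condXW p K') (condYW p K') a := by
    simp [partitionFn, tiltWeight, Fintype.sum_sum_type, Finset.mul_sum, mul_assoc]
  have hQW : IsProb (Sum.elim (fun w => 1 / 2 * outW p K w) (fun w => 1 / 2 * outW p K' w)) :=
    ⟨by rintro (w | w) <;> simp [outW_nonneg hp hK, outW_nonneg hp hK'], by
      simp [Fintype.sum_sum_type, ← Finset.mul_sum, sum_outW hp hK, sum_outW hp hK']; norm_num⟩
  have := Rgw_le_sum_mul_Lam hp hr1 hr2 hd1 hd2 hl1 hl2 hQW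
    (QX := Sum.elim (condXW p K) (condXW p K')) (QY := Sum.elim (condYW p K) (condYW p K'))
    (by rintro (w | w); exacts [condXW_nonneg hp hK w, condXW_nonneg hp hK' w])
    (by rintro (w | w) <;> exact sum_condXW_le_one w)
    (by rintro (w | w); exacts [condYW_nonneg hp hK w, condYW_nonneg hp hK' w])
    (by rintro (w | w) <;> exact sum_condYW_le_one w)
    fun a ha => by
      rw [hpart]
      have := partitionFn_induced_pos (r1 := r1) (r2 := r2) (lam1 := lam1) (lam2 := lam2) hp hK
        ((hp.1 a).lt_of_ne' ha)
      have := partitionFn_induced_pos (r1 := r1) (r2 := r2) (lam1 := lam1) (lam2 := lam2) hp hK'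
        ((hp.1 a).lt_of_ne' ha)
      positivity
  simpa only [Lam_eq_neg_logb_partitionFn, hpart] using this

end TiltedInformation

end GW

theorem tilted_info_well_defined_general
    {𝒳 𝒴 : Type*} [Fintype 𝒳] [Fintype 𝒴]
    (p : 𝒳 × 𝒴 → ℝ) (hp : IsProb p)
    (r1s r2s : ℝ) (hr1 : 0 < r1s) (hr2 : 0 < r2s)
    (lam1 lam2 : ℝ)
    (hd1 : HasDerivAt (fun r => Rgw p r r2s) (-lam1) r1s)
    (hd2 : HasDerivAt (fun r => Rgw p r1s r) (-lam2) r2s)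
    (hl1 : 0 < lam1) (hl2 : 0 < lam2)
    {k1 k2 : ℕ} (K1 : 𝒳 × 𝒴 → Fin k1 → ℝ) (K2 : 𝒳 × 𝒴 → Fin k2 → ℝ)
    (h1 : IsOptChannel p r1s r2s K1) (h2 : IsOptChannel p r1s r2s K2) :
    ∀ x y, 0 < p (x, y) →
      tiltedInfo p r1s r2s lam1 lam2 K1 x y = tiltedInfo p r1s r2s lam1 lam2 K2 x y := by
  intro x y hxy
  have hν : ∀ {k} {K : 𝒳 × 𝒴 → Fin k → ℝ}, IsOptChannel p r1s r2s K → ∀ a, 0 < p a →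
      0 < partitionFn r1s r2s lam1 lam2 (outW p K) (condXW p K) (condYW p K) a :=
    fun hK _ ha => partitionFn_induced_pos hp hK.2.1 ha
  have hν_eq := eq_of_sum_mul_neg_logb_midpoint_ge hp.1 (hν h1) (hν h2)
    (sum_mul_tiltedInfo_le_Rgw hp hl1.le hl2.le h1) (sum_mul_tiltedInfo_le_Rgw hp hl1.le hl2.le h2)
    (Rgw_le_sum_mul_neg_logb_midpoint hp hr1 hr2 hd1 hd2 hl1.le hl2.le h1.2.1 h2.2.1) hxy
  exact congrArg (fun ν => -Real.logb 2 ν) hν_eq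

/-- Lemma 2: for any two optimal test channels achieving
`R(r1*,r2*|P_XY)`, the corresponding functions `Λ` (built from the induced
output and conditional distributions) agree on the support of `P_XY`; hence
the tilted information density is well-defined irrespective of the choice of
optimal test channel. -/
theorem tilted_info_well_defined
    {𝒳 𝒴 : Type*} [Fintype 𝒳] [Fintype 𝒴]
    (p : 𝒳 × 𝒴 → ℝ) (hp : IsProb p)
    (r1s r2s : ℝ) (hr1 : 0 < r1s) (hr2 : 0 < r2s)
    (hR : 0 < Rgw p r1s r2s)
    (lam1 lam2 : ℝ)
    (hd1 : HasDerivAt (fun r => Rgw p r r2s) (-lam1) r1s)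
    (hd2 : HasDerivAt (fun r => Rgw p r1s r) (-lam2) r2s)
    (hl1 : 0 < lam1) (hl2 : 0 < lam2)
    {k1 k2 : ℕ} (K1 : 𝒳 × 𝒴 → Fin k1 → ℝ) (K2 : 𝒳 × 𝒴 → Fin k2 → ℝ)
    (h1 : IsOptChannel p r1s r2s K1) (h2 : IsOptChannel p r1s r2s K2) :
    ∀ x y, 0 < p (x, y) →
      tiltedInfo p r1s r2s lam1 lam2 K1 x y = tiltedInfo p r1s r2s lam1 lam2 K2 x y :=
  tilted_info_well_defined_general p hp r1s r2s hr1 hr2 lam1 lam2 hd1 hd2 hl1 hl2 K1 K2 h1 h2
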